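/- The coordinate change r6 is symplectic: at every point (q1,p1,q2,p2) ∈ ℂ⁴ with q1 ≠ 0, the Jacobian matrix J of the map (q1,p1,q2,p2) ↦ (q1, p1 + p2/q1², q2 + 1/q1, p2) satisfies Jᵀ · Ω · J = Ω, where Ω is the standard symplectic matrix with block-diagonal 2×2 blocks [[0,1],[−1,0]] in the coordinate ordering (q1,p1,q2,p2). Equivalently, dy6∧dx6 + dw6∧dz6 = dp1∧dq1 + dp2∧dq2 for (x6,y6,z6,w6) = (q1, p1 + p2/q1², q2 + 1/q1, p2). -/

import Mathlib

open Matrix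

/-- The Jacobian matrix of a map `F : ℂ⁴ → ℂ⁴` at a point `x`: the 4×4 matrix of
partial derivatives, `J i j = ∂F_i/∂x_j`. -/
noncomputable def jacobian (F : (Fin 4 → ℂ) → (Fin 4 → ℂ)) (x : Fin 4 → ℂ) :
    Matrix (Fin 4) (Fin 4) ℂ :=
  Matrix.of fun i j => fderiv ℂ (fun y => F y i) x (Pi.single j 1)

/-- The standard symplectic matrix with block-diagonal 2×2 blocks `[[0,1],[-1,0]]`
in the coordinate ordering `(q1, p1, q2, p2)`. -/
def standardSymplectic : Matrix (Fin 4) (Fin 4) ℂ :=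
  !![0, 1, 0, 0; -1, 0, 0, 0; 0, 0, 0, 1; 0, 0, -1, 0]

/-- The coordinate chart `r6`:
`(q1,p1,q2,p2) ↦ (x6,y6,z6,w6) = (q1, p1 + p2/q1², q2 + 1/q1, p2)`. -/
noncomputable def chartR6 (x : Fin 4 → ℂ) : Fin 4 → ℂ :=
  ![x 0, x 1 + x 3 / x 0 ^ 2, x 2 + 1 / x 0, x 3]

noncomputable def Pr (i : Fin 4) : (Fin 4 → ℂ) →L[ℂ] ℂ := ContinuousLinearMap.proj i

lemma jac_chartR6 (x : Fin 4 → ℂ) (h : x 0 ≠ 0) :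
    jacobian chartR6 x =
      !![1, 0, 0, 0;
         -2 * x 3 / x 0 ^ 3, 1, 0, (x 0 ^ 2)⁻¹;
         -(x 0 ^ 2)⁻¹, 0, 1, 0;
         0, 0, 0, 1] := by
  have h0 : HasFDerivAt (fun y : Fin 4 → ℂ => y 0) (Pr 0) x := (Pr 0).hasFDerivAt
  have h1 : HasFDerivAt (fun y : Fin 4 → ℂ => y 1) (Pr 1) x := (Pr 1).hasFDerivAt
  have h2 : HasFDerivAt (fun y : Fin 4 → ℂ => y 2) (Pr 2) x := (Pr 2).hasFDerivAt
  have h3 : HasFDerivAt (fun y : Fin 4 → ℂ => y 3) (Pr 3) x := (Pr 3).hasFDerivAt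
  have hinv := (hasFDerivAt_inv (𝕜 := ℂ) (x := x 0 * x 0) (mul_ne_zero h h)).comp x (h0.mul h0)
  have hinv0 := (hasFDerivAt_inv (𝕜 := ℂ) (x := x 0) h).comp x h0
  have hf1 := h1.add (h3.mul hinv)
  have hf2 := h2.add hinv0
  ext i j
  fin_cases i
  · show fderiv ℂ (fun y => chartR6 y 0) x (Pi.single j 1) = _
    simp only [chartR6, Matrix.cons_val_zero]
    rw [h0.fderiv]
    fin_cases j <;> simp [Pr, Pi.single_apply, Matrix.vecHead, Matrix.vecTail]
  · show fderiv ℂ (fun y => chartR6 y 1) x (Pi.single j 1) = _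
    simp only [chartR6, Matrix.cons_val_one, Matrix.head_cons, Matrix.cons_val_zero]
    simp only [div_eq_mul_inv, pow_two]
    rw [show (fun y : Fin 4 → ℂ => y 1 + y 3 * (y 0 * y 0)⁻¹)
        = (fun y : Fin 4 → ℂ => y 1 + y 3 * ((fun z : ℂ => z⁻¹) ∘ fun y : Fin 4 → ℂ => y 0 * y 0) y)
        from rfl, (show HasFDerivAt (fun y : Fin 4 → ℂ => y 1 + y 3 * ((fun z : ℂ => z⁻¹) ∘ fun y : Fin 4 → ℂ => y 0 * y 0) y) _ x from hf1).fderiv]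
    fin_cases j <;> simp [Pr, Pi.single_apply, Matrix.vecHead, Matrix.vecTail] <;> field_simp <;> ring
  · show fderiv ℂ (fun y => chartR6 y 2) x (Pi.single j 1) = _
    simp only [chartR6, Matrix.cons_val_two, Matrix.tail_cons, Matrix.head_cons, one_div]
    rw [show (fun y : Fin 4 → ℂ => y 2 + (y 0)⁻¹)
        = (fun y : Fin 4 → ℂ => y 2 + ((fun z : ℂ => z⁻¹) ∘ fun y : Fin 4 → ℂ => y 0) y)
        from rfl, (show HasFDerivAt (fun y : Fin 4 → ℂ => y 2 + ((fun z : ℂ => z⁻¹) ∘ fun y : Fin 4 → ℂ => y 0) y) _ x from hf2).fderiv]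
    fin_cases j <;> simp [Pr, Pi.single_apply, Matrix.vecHead, Matrix.vecTail] <;> field_simp <;> ring
  · show fderiv ℂ (fun y => chartR6 y 3) x (Pi.single j 1) = _
    simp only [chartR6, Matrix.cons_val_three, Matrix.tail_cons, Matrix.head_cons]
    rw [h3.fderiv]
    fin_cases j <;> simp [Pr, Pi.single_apply, Matrix.vecHead, Matrix.vecTail]

/-- The coordinate change `r6` is symplectic: at every point with `q1 ≠ 0`, its
Jacobian matrix `J` satisfies `Jᵀ * Ω * J = Ω`, i.e.
`dy6∧dx6 + dw6∧dz6 = dp1∧dq1 + dp2∧dq2`. -/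
theorem chartR6_symplectic (x : Fin 4 → ℂ) (h : x 0 ≠ 0) :
    (jacobian chartR6 x)ᵀ * standardSymplectic * jacobian chartR6 x =
      standardSymplectic := by
  rw [jac_chartR6 x h]
  ext i j
  fin_cases i <;> fin_cases j <;>
    simp [standardSymplectic, Matrix.mul_apply, Fin.sum_univ_four, Matrix.transpose_apply, Matrix.vecHead, Matrix.vecTail] <;>
    field_simp <;> ring
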